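/- arXiv:1708.04478 — 3 statements merged into one kernel-verified Lean document; each statement's English description precedes it below -/
import Mathlib

section
/- Let Γ be the free group on p ≥ 2 generators and 𝔠 a non-trivial conjugacy class with minimal word length k. Then for every m ≥ 1, the number of elements of 𝔠 of word length k+2m equals (2p-2)(2p-1)^{m-1} · #𝔠_k, where #𝔠_k is the number of elements of 𝔠 of word length k. -/
/-!
Write the reduced word of `x` as `u w u⁻¹` with `w` cyclically reduced, and let `ℓ(x) = |w|`.
Since `|xⁿ| = 2|u| + n ℓ(x)` and `|g xⁿ g⁻¹|` differs from `|xⁿ|` by at most `2|g|`, `ℓ` is a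
conjugacy invariant, so it equals the minimal length `k` in the class and `|x| = k + 2|u|` on `𝔠`.
Hence for `n ≥ k` every element of `𝔠_{n+2}` has a reduced word `a v a⁻¹`, and `a v a⁻¹ ↦ (v, a)`
is a bijection from `𝔠_{n+2}` onto the pairs `(x, a)` with `x ∈ 𝔠_n` and the word `a x a⁻¹`
reduced. The admissible letters are all but the inverse of the first letter of `x` and its last
letter; these differ when `x` is cyclically reduced (`n = k`) and coincide otherwise, leaving
`2p - 2` and `2p - 1` choices respectively.
-/

theorem Set.Finite.ncard_biUnion_of_ncard_eq {ι β : Type*} {t : Set ι} (ht : t.Finite)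
    {s : ι → Set β} (hs : ∀ i ∈ t, (s i).Finite) (h : t.PairwiseDisjoint s) {m : ℕ}
    (hm : ∀ i ∈ t, (s i).ncard = m) : (⋃ i ∈ t, s i).ncard = m * t.ncard := by
  rw [ht.ncard_biUnion hs h, finsum_mem_congr rfl hm, ← finsum_one, mul_finsum_mem, mul_one]

theorem Nat.card_prod_bool (α : Type*) : Nat.card (α × Bool) = 2 * Nat.card α := by
  rw [Nat.card_prod, Nat.card_eq_fintype_card (α := Bool), Fintype.card_bool, mul_comm]

namespace FreeGroup

open List reduceCyclically

variable {α : Type*}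

theorem isReduced_cons_append_singleton_iff {L : List (α × Bool)} (hL : IsReduced L)
    (hne : L ≠ []) {a b : α × Bool} : IsReduced (a :: (L ++ [b])) ↔
      (a.1 = (L.head hne).1 → a.2 = (L.head hne).2) ∧
        ((L.getLast hne).1 = b.1 → (L.getLast hne).2 = b.2) := by
  rw [IsReduced, isChain_cons, isChain_append]
  simp [head?_eq_some_head hne, getLast?_eq_some_getLast hne, show L.IsChain _ from hL]

variable [DecidableEq α]

def cyclicLength (x : FreeGroup α) : ℕ := (reduceCyclically x.toWord).length

theorem norm_eq_two_mul_length_conjugator_add_cyclicLength (x : FreeGroup α) :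
    norm x = 2 * (conjugator x.toWord).length + cyclicLength x := by
  have := congrArg length (conj_conjugator_reduceCyclically x.toWord)
  simp only [length_append, invRev_length] at this
  rw [norm, cyclicLength]
  omega

theorem norm_pow (x : FreeGroup α) {n : ℕ} (hn : n ≠ 0) :
    norm (x ^ n) = 2 * (conjugator x.toWord).length + n * cyclicLength x := by
  rw [norm, toWord_pow, reduce_flatten_replicate isReduced_toWord, if_neg hn]
  simp only [append_assoc, length_append, length_flatten, map_replicate, sum_replicate,
    smul_eq_mul, invRev_length, cyclicLength]
  ring

theorem cyclicLength_le_of_isConj {x y : FreeGroup α} (h : IsConj x y) :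
    cyclicLength y ≤ cyclicLength x := by
  obtain ⟨g, rfl⟩ := isConj_iff.mp h
  have hbound : ∀ n ≠ 0, n * cyclicLength (g * x * g⁻¹) ≤ 2 * norm g + norm (x ^ n) := by
    intro n hn
    calc n * cyclicLength (g * x * g⁻¹) ≤ norm ((g * x * g⁻¹) ^ n) := by
          rw [norm_pow _ hn]; omega
      _ = norm (g * x ^ n * g⁻¹) := by rw [conj_pow]
      _ ≤ norm g + norm (x ^ n) + norm g⁻¹ :=
          (norm_mul_le _ _).trans (by gcongr; exact norm_mul_le _ _)
      _ = 2 * norm g + norm (x ^ n) := by rw [norm_inv_eq]; ring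
  by_contra! hlt
  set N := 2 * norm g + 2 * (conjugator x.toWord).length + 1
  have := hbound N (by omega)
  rw [norm_pow _ (by omega)] at this
  have hN : N * (cyclicLength x + 1) ≤ N * cyclicLength (g * x * g⁻¹) :=
    Nat.mul_le_mul_left _ hlt
  rw [mul_add_one] at hN
  omega

theorem cyclicLength_eq_of_isConj {x y : FreeGroup α} (h : IsConj x y) :
    cyclicLength x = cyclicLength y :=
  le_antisymm (cyclicLength_le_of_isConj h.symm) (cyclicLength_le_of_isConj h)

theorem toWord_mk_reduceCyclically (x : FreeGroup α) :
    (mk (reduceCyclically x.toWord)).toWord = reduceCyclically x.toWord := by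
  rw [toWord_mk, (reduceCyclically.isCyclicallyReduced isReduced_toWord).isReduced.reduce_eq]

theorem isConj_mk_reduceCyclically (L : List (α × Bool)) :
    IsConj (mk L) (mk (reduceCyclically L)) := by
  conv_lhs => rw [← conj_conjugator_reduceCyclically L, ← mul_mk, ← mul_mk, ← inv_mk]
  exact isConj_iff.mpr ⟨(mk (conjugator L))⁻¹, by group⟩

theorem isLeast_norm_isConj_cyclicLength (c : FreeGroup α) :
    IsLeast {n : ℕ | ∃ x : FreeGroup α, IsConj c x ∧ norm x = n} (cyclicLength c) := by
  refine ⟨⟨_, mk_toWord (x := c) ▸ isConj_mk_reduceCyclically c.toWord,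
    by rw [norm, toWord_mk_reduceCyclically, cyclicLength]⟩, ?_⟩
  rintro _ ⟨x, hx, rfl⟩
  rw [norm_eq_two_mul_length_conjugator_add_cyclicLength, cyclicLength_eq_of_isConj hx]
  omega

theorem norm_eq_of_isLeast {c : FreeGroup α} {k : ℕ}
    (hk : IsLeast {n : ℕ | ∃ x : FreeGroup α, IsConj c x ∧ norm x = n} k) {x : FreeGroup α}
    (hx : IsConj c x) : norm x = k + 2 * (conjugator x.toWord).length := by
  rw [hk.unique (isLeast_norm_isConj_cyclicLength c),
    norm_eq_two_mul_length_conjugator_add_cyclicLength, cyclicLength_eq_of_isConj hx]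
  ring

theorem exists_eq_cons_append_of_conjugator_ne_nil {L : List (α × Bool)}
    (h : conjugator L ≠ []) : ∃ a L', L = a :: (L' ++ [(a.1, !a.2)]) := by
  induction L using List.bidirectionalRec with
  | nil => simp at h
  | singleton => simp at h
  | cons_append a L' b =>
    rw [conjugator.cons_append] at h
    split_ifs at h with hab
    · refine ⟨a, L', ?_⟩
      rw [← hab.1, ← hab.2, Bool.not_not]
    · simp at h

theorem isCyclicallyReduced_of_conjugator_eq_nil {L : List (α × Bool)} (hL : IsReduced L)
    (h : conjugator L = []) : IsCyclicallyReduced L := by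
  have := conj_conjugator_reduceCyclically L
  simp only [h, invRev, map_nil, reverse_nil, nil_append, append_nil] at this
  exact this ▸ reduceCyclically.isCyclicallyReduced hL

def lengtheningLetters (x : FreeGroup α) : Set (α × Bool) :=
  {a | IsReduced (a :: (x.toWord ++ [(a.1, !a.2)]))}

theorem toWord_conj_of_mem_lengtheningLetters {x : FreeGroup α} {a : α × Bool}
    (ha : a ∈ lengtheningLetters x) :
    (mk [a] * x * (mk [a])⁻¹).toWord = a :: (x.toWord ++ [(a.1, !a.2)]) := by
  rw [inv_mk, ← mk_toWord (x := x), mul_mk, mul_mk, toWord_mk, mk_toWord]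
  exact ha.reduce_eq

theorem lengtheningLetters_eq_compl {x : FreeGroup α} (hne : x.toWord ≠ []) :
    lengtheningLetters x =
      {((x.toWord.head hne).1, !(x.toWord.head hne).2), x.toWord.getLast hne}ᶜ := by
  ext ⟨a, s⟩
  simp only [lengtheningLetters, Set.mem_ofPred_eq,
    isReduced_cons_append_singleton_iff isReduced_toWord hne]
  obtain ⟨h1, h2⟩ := x.toWord.head hne
  obtain ⟨l1, l2⟩ := x.toWord.getLast hne
  cases s <;> cases h2 <;> cases l2 <;> simp <;> tauto

theorem ncard_lengtheningLetters_of_isCyclicallyReduced [Finite α] {x : FreeGroup α}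
    (hne : x.toWord ≠ []) (hx : IsCyclicallyReduced x.toWord) :
    (lengtheningLetters x).ncard = 2 * Nat.card α - 2 := by
  rw [lengtheningLetters_eq_compl hne, Set.ncard_compl, Set.ncard_pair, Nat.card_prod_bool]
  intro h
  have := hx.2 _ (getLast?_eq_some_getLast hne) _ (head?_eq_some_head hne)
  rw [← h] at this
  simp at this

theorem ncard_lengtheningLetters_of_eq_cons_append [Finite α] {x : FreeGroup α} {b : α × Bool}
    {L : List (α × Bool)} (hx : x.toWord = b :: (L ++ [(b.1, !b.2)])) :
    (lengtheningLetters x).ncard = 2 * Nat.card α - 1 := by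
  have hne : x.toWord ≠ [] := by simp [hx]
  have hlast : x.toWord.getLast hne = ((x.toWord.head hne).1, !(x.toWord.head hne).2) := by
    simp [hx]
  rw [lengtheningLetters_eq_compl hne, hlast, Set.pair_eq_singleton, Set.ncard_compl,
    Set.ncard_singleton, Nat.card_prod_bool]

theorem eq_and_eq_of_conj_eq {x x' : FreeGroup α} {a a' : α × Bool}
    (ha : a ∈ lengtheningLetters x) (ha' : a' ∈ lengtheningLetters x')
    (h : mk [a] * x * (mk [a])⁻¹ = mk [a'] * x' * (mk [a'])⁻¹) : a = a' ∧ x = x' := by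
  have := congrArg toWord h
  rw [toWord_conj_of_mem_lengtheningLetters ha, toWord_conj_of_mem_lengtheningLetters ha',
    cons.injEq] at this
  obtain ⟨rfl, hw⟩ := this
  exact ⟨rfl, toWord_injective (append_cancel_right hw)⟩

def classSphere (c : FreeGroup α) (n : ℕ) : Set (FreeGroup α) :=
  {x | IsConj c x ∧ norm x = n}

theorem classSphere_finite [Finite α] (c : FreeGroup α) (n : ℕ) : (classSphere c n).Finite :=
  ((List.finite_length_eq (α × Bool) n).preimage toWord_injective.injOn).subset fun _ hx => hx.2

section MinimalLength

variable {c : FreeGroup α} {k : ℕ}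
  (hk : IsLeast {n : ℕ | ∃ x : FreeGroup α, IsConj c x ∧ norm x = n} k)
include hk

theorem classSphere_add_two {n : ℕ} (hn : k ≤ n) :
    classSphere c (n + 2) =
      ⋃ x ∈ classSphere c n, (fun a => mk [a] * x * (mk [a])⁻¹) '' lengtheningLetters x := by
  ext y
  simp only [Set.mem_iUnion, Set.mem_image, exists_prop]
  constructor
  · rintro ⟨hy, hyn⟩
    have hconj : conjugator y.toWord ≠ [] := by
      intro h
      have := norm_eq_of_isLeast hk hy
      rw [h, length_nil] at this
      omega
    obtain ⟨a, L, hyL⟩ := exists_eq_cons_append_of_conjugator_ne_nil hconj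
    have hL : (mk L).toWord = L := by
      rw [toWord_mk, IsReduced.reduce_eq]
      exact isReduced_toWord.infix ⟨[a], [(a.1, !a.2)], by rw [hyL]; simp⟩
    have hy_eq : y = mk [a] * mk L * (mk [a])⁻¹ := by
      rw [← mk_toWord (x := y), hyL, inv_mk, mul_mk, mul_mk]
      simp [invRev]
    refine ⟨mk L, ⟨hy.trans ?_, ?_⟩, a, ?_, hy_eq.symm⟩
    · exact isConj_iff.mpr ⟨(mk [a])⁻¹, by rw [hy_eq]; group⟩
    · have := congrArg length hyL
      rw [norm, hL]
      simp only [length_cons, length_append, length_nil] at this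
      rw [norm] at hyn
      omega
    · rw [lengtheningLetters, Set.mem_ofPred_eq, hL, ← hyL]
      exact isReduced_toWord
  · rintro ⟨x, ⟨hx, hxn⟩, a, ha, rfl⟩
    refine ⟨hx.trans (isConj_iff.mpr ⟨mk [a], rfl⟩), ?_⟩
    rw [norm, toWord_conj_of_mem_lengtheningLetters ha]
    simp only [length_cons, length_append, length_nil]
    rw [norm] at hxn
    omega

theorem ncard_lengtheningLetters_of_mem_classSphere [Finite α] (hc : c ≠ 1) {n : ℕ}
    {x : FreeGroup α} (hx : x ∈ classSphere c n) :
    (lengtheningLetters x).ncard = if n = k then 2 * Nat.card α - 2 else 2 * Nat.card α - 1 := by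
  have hnorm := norm_eq_of_isLeast hk hx.1
  rw [hx.2] at hnorm
  split_ifs with hnk
  · have hne : x.toWord ≠ [] := by
      rw [Ne, toWord_eq_nil_iff]
      rintro rfl
      exact hc (isConj_one_left.mp hx.1)
    refine ncard_lengtheningLetters_of_isCyclicallyReduced hne
      (isCyclicallyReduced_of_conjugator_eq_nil isReduced_toWord ?_)
    rw [← length_eq_zero_iff]
    omega
  · obtain ⟨b, L, hxL⟩ := exists_eq_cons_append_of_conjugator_ne_nil
      (L := x.toWord) (by rw [Ne, ← length_eq_zero_iff]; omega)
    exact ncard_lengtheningLetters_of_eq_cons_append hxL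

theorem ncard_classSphere_add_two [Finite α] (hc : c ≠ 1) {n : ℕ} (hn : k ≤ n) :
    (classSphere c (n + 2)).ncard =
      (if n = k then 2 * Nat.card α - 2 else 2 * Nat.card α - 1) * (classSphere c n).ncard := by
  rw [classSphere_add_two hk hn]
  refine (classSphere_finite c n).ncard_biUnion_of_ncard_eq (fun x _ => Set.toFinite _) ?_
    fun x hx => ?_
  · rintro x - x' - hxx'
    rw [Function.onFun, Set.disjoint_left]
    rintro - ⟨a, ha, rfl⟩ ⟨a', ha', h⟩
    exact hxx' (eq_and_eq_of_conj_eq ha ha' h.symm).2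
  · rw [Set.InjOn.ncard_image fun a ha a' ha' h => (eq_and_eq_of_conj_eq ha ha' h).1]
    exact ncard_lengtheningLetters_of_mem_classSphere hk hc hx

theorem ncard_classSphere_add_two_mul [Finite α] (hc : c ≠ 1) {m : ℕ} (hm : 1 ≤ m) :
    (classSphere c (k + 2 * m)).ncard =
      (2 * Nat.card α - 2) * (2 * Nat.card α - 1) ^ (m - 1) * (classSphere c k).ncard := by
  induction m, hm using Nat.le_induction with
  | base => simpa using ncard_classSphere_add_two hk hc le_rfl
  | succ m hm ih =>
    rw [mul_add_one, ← add_assoc, ncard_classSphere_add_two hk hc (by omega), if_neg (by omega),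
      ih, Nat.add_sub_cancel, ← Nat.sub_add_cancel hm, pow_succ, Nat.add_sub_cancel]
    ring

end MinimalLength

end FreeGroup

theorem stmt2_general (p : ℕ) (c : FreeGroup (Fin p)) (hc : c ≠ 1) (k : ℕ)
    (hk : IsLeast {n : ℕ | ∃ x : FreeGroup (Fin p), IsConj c x ∧ FreeGroup.norm x = n} k)
    (m : ℕ) (hm : 1 ≤ m) :
    Set.ncard {x : FreeGroup (Fin p) | IsConj c x ∧ FreeGroup.norm x = k + 2 * m}
      = (2 * p - 2) * (2 * p - 1) ^ (m - 1)
        * Set.ncard {x : FreeGroup (Fin p) | IsConj c x ∧ FreeGroup.norm x = k} := by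
  have h := FreeGroup.ncard_classSphere_add_two_mul hk hc hm
  rwa [Nat.card_eq_fintype_card, Fintype.card_fin] at h

/-- Counting elements of word length `k + 2m` in a non-trivial conjugacy class of the
free group on `p ≥ 2` generators: `#𝔠_{k+2m} = (2p-2)(2p-1)^(m-1) ⬝ #𝔠_k` for `m ≥ 1`. -/
theorem stmt2 (p : ℕ) (hp : 2 ≤ p) (c : FreeGroup (Fin p)) (hc : c ≠ 1) (k : ℕ)
    (hk : IsLeast {n : ℕ | ∃ x : FreeGroup (Fin p), IsConj c x ∧ FreeGroup.norm x = n} k)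
    (m : ℕ) (hm : 1 ≤ m) :
    Set.ncard {x : FreeGroup (Fin p) | IsConj c x ∧ FreeGroup.norm x = k + 2 * m}
      = (2 * p - 2) * (2 * p - 1) ^ (m - 1)
        * Set.ncard {x : FreeGroup (Fin p) | IsConj c x ∧ FreeGroup.norm x = k} :=
  stmt2_general p c hc k hk m hm
end

section
/- Let f : Σ* → ℝ be Lipschitz with respect to the metric d_θ (0 < θ < 1) with Lipschitz seminorm |f|_θ. Let g = g_1⋯g_k be a cyclically reduced word of length k and w = w_1⋯w_m a reduced word of length m with w_1 ∉ {g_1, g_k^{-1}}. Then |f^{k+2m}(w^{-1}gw) − f^m(w) − f^k(g) − f^m(w^{-1})| ≤ 2|f|_θ θ/(1−θ), where f^n(x) = Σ_{j=0}^{n-1} f(σ^j x) denotes the Birkhoff sum. -/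
/-!
Since `w₁ ∉ {g₁, g_k⁻¹}`, the word `w⁻¹gw` is reduced, and its Birkhoff sum splits along the
blocks `w⁻¹`, `g`, `w`. The last block contributes exactly `f^m(w)`. In the first block, the
`j`-th orbit point `σʲ(w⁻¹gw)` agrees with `σʲ(w⁻¹)` on the `m - j` letters left in the block,
so the Lipschitz bound makes the `j`-th error at most `|f|_θ θ^(m-j)`; these errors sum to at most
`|f|_θ θ/(1-θ)`, and the same holds for the block `g` compared with `g`.
-/

open Classical

/-- Alphabet of `2p` symbols. -/
abbrev Symb (p : ℕ) := Fin p × Bool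

/-- Alphabet together with the empty symbol `none`. -/
abbrev OSymb (p : ℕ) := Option (Symb p)

/-- A sequence represents a (finite or infinite) reduced word. -/
def RedSeq (p : ℕ) (x : ℕ → OSymb p) : Prop :=
  (∀ n a b, x n = some a → x (n + 1) = some b → b ≠ (a.1, !a.2)) ∧
  (∀ n, x n = none → x (n + 1) = none)

/-- The shift map. -/
def sh (p : ℕ) (x : ℕ → OSymb p) : ℕ → OSymb p := fun n => x (n + 1)

/-- The metric `d_θ`. -/
noncomputable def dtheta (p : ℕ) (θ : ℝ) (x y : ℕ → OSymb p) : ℝ :=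
  if x = y then 0 else θ ^ sInf {n : ℕ | x n ≠ y n}

/-- The point of `Σ*` associated to a finite word, padded by the empty symbol. -/
def seqOf (p : ℕ) (L : List (Symb p)) : ℕ → OSymb p := fun n => L[n]?

/-- A list is a reduced word. -/
def ListRed (p : ℕ) (w : List (Symb p)) : Prop :=
  List.Chain' (fun a b : Symb p => b ≠ (a.1, !a.2)) w

/-- The formal inverse of a word. -/
def invL (p : ℕ) (L : List (Symb p)) : List (Symb p) :=
  (L.map fun a => (a.1, !a.2)).reverse

/-- Birkhoff sum `f^n = f + f∘σ + ⋯ + f∘σ^{n-1}`. -/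
noncomputable def birk (p : ℕ) (f : (ℕ → OSymb p) → ℝ) (n : ℕ) (x : ℕ → OSymb p) : ℝ :=
  ∑ j ∈ Finset.range n, f ((sh p)^[j] x)

variable {p : ℕ}

lemma sh_iterate_seqOf (j : ℕ) (L : List (Symb p)) :
    (sh p)^[j] (seqOf p L) = seqOf p (L.drop j) := by
  induction j with
  | zero => rfl
  | succ j ih =>
    rw [Function.iterate_succ_apply', ih]
    funext n
    simp only [sh, seqOf, List.getElem?_drop]
    congr 1
    omega

lemma ListRed.redSeq_seqOf {L : List (Symb p)} (h : ListRed p L) : RedSeq p (seqOf p L) := by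
  refine ⟨fun n a b ha hb => ?_, fun n hn => ?_⟩
  · obtain ⟨hn, rfl⟩ := List.getElem?_eq_some_iff.1 ha
    obtain ⟨hn1, rfl⟩ := List.getElem?_eq_some_iff.1 hb
    exact List.isChain_iff_getElem.1 h n hn1
  · exact List.getElem?_eq_none (Nat.le_succ_of_le (List.getElem?_eq_none_iff.1 hn))

lemma ListRed.invL {W : List (Symb p)} (h : ListRed p W) : ListRed p (invL p W) := by
  change List.IsChain _ (W.map _).reverse
  rw [List.isChain_reverse, List.isChain_map]
  refine h.imp fun a b hab he => hab ?_
  simpa using he.symm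

lemma dtheta_le_pow {θ : ℝ} (hθ0 : 0 ≤ θ) (hθ1 : θ ≤ 1) {x y : ℕ → OSymb p} {N : ℕ}
    (h : ∀ n < N, x n = y n) : dtheta p θ x y ≤ θ ^ N := by
  unfold dtheta
  split_ifs with hxy
  · positivity
  · have hne : {n : ℕ | x n ≠ y n}.Nonempty := by
      by_contra hc
      exact hxy (funext fun n => by_contra fun hn => hc ⟨n, hn⟩)
    exact pow_le_pow_of_le_one hθ0 hθ1 (le_csInf hne fun n hn => not_lt.1 fun hlt => hn (h n hlt))

lemma dtheta_seqOf_append_le {θ : ℝ} (hθ0 : 0 ≤ θ) (hθ1 : θ ≤ 1) (A B : List (Symb p)) :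
    dtheta p θ (seqOf p (A ++ B)) (seqOf p A) ≤ θ ^ A.length :=
  dtheta_le_pow hθ0 hθ1 fun _ hn => List.getElem?_append_left hn

lemma lipschitz_const_nonneg {θ : ℝ} (hθ0 : 0 < θ) {C : ℝ} {f : (ℕ → OSymb p) → ℝ}
    (hf : ∀ x y, RedSeq p x → RedSeq p y → |f x - f y| ≤ C * dtheta p θ x y) (a : Symb p) :
    0 ≤ C := by
  have hne : seqOf p [] ≠ seqOf p [a] := fun he => by simpa [seqOf] using congrFun he 0
  have hCd := (abs_nonneg _).trans
    (hf _ _ (ListRed.redSeq_seqOf List.isChain_nil)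
      (ListRed.redSeq_seqOf (List.isChain_singleton a)))
  rw [dtheta, if_neg hne] at hCd
  exact nonneg_of_mul_nonneg_left hCd (pow_pos hθ0 _)

lemma birk_add (f : (ℕ → OSymb p) → ℝ) (a b : ℕ) (x : ℕ → OSymb p) :
    birk p f (a + b) x = birk p f a x + birk p f b ((sh p)^[a] x) := by
  rw [birk, birk, birk, Finset.sum_range_add]
  simp only [Nat.add_comm a, Function.iterate_add_apply]

lemma birk_seqOf_append (f : (ℕ → OSymb p) → ℝ) (A B : List (Symb p)) :
    birk p f (A.length + B.length) (seqOf p (A ++ B))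
      = birk p f A.length (seqOf p (A ++ B)) + birk p f B.length (seqOf p B) := by
  rw [birk_add, sh_iterate_seqOf, List.drop_left]

lemma sum_range_pow_sub_le {θ : ℝ} (hθ0 : 0 ≤ θ) (hθ1 : θ < 1) (n : ℕ) :
    ∑ j ∈ Finset.range n, θ ^ (n - j) ≤ θ / (1 - θ) := by
  have hreflect : ∑ j ∈ Finset.range n, θ ^ (n - j) = ∑ i ∈ Finset.Ico 1 (n + 1), θ ^ i := by
    rw [← Finset.sum_range_reflect, Finset.sum_Ico_eq_sum_range]
    refine Finset.sum_congr rfl fun j hj => ?_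
    rw [Finset.mem_range] at hj
    congr 1
    omega
  simpa [hreflect] using geom_sum_Ico_le_of_lt_one (m := 1) (n := n + 1) hθ0 hθ1

lemma abs_birk_seqOf_append_sub_le {θ : ℝ} (hθ0 : 0 ≤ θ) (hθ1 : θ < 1) {C : ℝ} (hC : 0 ≤ C)
    {f : (ℕ → OSymb p) → ℝ}
    (hf : ∀ x y, RedSeq p x → RedSeq p y → |f x - f y| ≤ C * dtheta p θ x y)
    {A B : List (Symb p)} (hAB : ListRed p (A ++ B)) :
    |birk p f A.length (seqOf p (A ++ B)) - birk p f A.length (seqOf p A)| ≤ C * θ / (1 - θ) := by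
  have hterm : ∀ j ∈ Finset.range A.length,
      |f ((sh p)^[j] (seqOf p (A ++ B))) - f ((sh p)^[j] (seqOf p A))| ≤ C * θ ^ (A.length - j) := by
    intro j hj
    have hdrop : (A ++ B).drop j = A.drop j ++ B :=
      List.drop_append_of_le_length (Finset.mem_range.1 hj).le
    have hred : ListRed p (A.drop j ++ B) := hdrop ▸ hAB.drop j
    rw [sh_iterate_seqOf, sh_iterate_seqOf, hdrop, ← List.length_drop]
    exact (hf _ _ hred.redSeq_seqOf (ListRed.redSeq_seqOf (List.isChain_append.1 hred).1)).trans
      (mul_le_mul_of_nonneg_left (dtheta_seqOf_append_le hθ0 hθ1.le _ _) hC)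
  calc |birk p f A.length (seqOf p (A ++ B)) - birk p f A.length (seqOf p A)|
      ≤ ∑ j ∈ Finset.range A.length,
          |f ((sh p)^[j] (seqOf p (A ++ B))) - f ((sh p)^[j] (seqOf p A))| := by
        rw [birk, birk, ← Finset.sum_sub_distrib]
        exact Finset.abs_sum_le_sum_abs _ _
    _ ≤ C * ∑ j ∈ Finset.range A.length, θ ^ (A.length - j) := by
        rw [Finset.mul_sum]
        exact Finset.sum_le_sum hterm
    _ ≤ C * θ / (1 - θ) := by
        rw [mul_div_assoc]
        exact mul_le_mul_of_nonneg_left (sum_range_pow_sub_le hθ0 hθ1 _) hC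

lemma listRed_append_and_invL_append {G W : List (Symb p)} (hG : ListRed p G) (hGne : G ≠ [])
    (hW : ListRed p W)
    (hWhead : ∀ a ∈ W.head?,
      (∀ b ∈ G.head?, a ≠ b) ∧ (∀ b ∈ G.getLast?, a ≠ (b.1, !b.2))) :
    ListRed p (G ++ W) ∧ ListRed p (invL p W ++ (G ++ W)) := by
  have hGW : ListRed p (G ++ W) := hG.append hW fun x hx y hy => (hWhead y hy).2 x hx
  refine ⟨hGW, hW.invL.append hGW fun x hx y hy => ?_⟩
  rw [invL, List.getLast?_reverse, List.head?_map] at hx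
  obtain ⟨a, ha, rfl⟩ := Option.mem_map.1 hx
  rw [List.head?_append_of_ne_nil _ hGne] at hy
  simpa using Ne.symm ((hWhead a ha).1 y hy)

theorem stmt10_general (p : ℕ) (θ : ℝ) (hθ0 : 0 < θ) (hθ1 : θ < 1)
    (C : ℝ) (f : (ℕ → OSymb p) → ℝ)
    (hf : ∀ x y, RedSeq p x → RedSeq p y → |f x - f y| ≤ C * dtheta p θ x y)
    (G W : List (Symb p)) (k m : ℕ)
    (hG : ListRed p G) (hGlen : G.length = k) (hk : 1 ≤ k)
    (hW : ListRed p W) (hWlen : W.length = m)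
    (hWhead : ∀ a ∈ W.head?,
      (∀ b ∈ G.head?, a ≠ b) ∧ (∀ b ∈ G.getLast?, a ≠ (b.1, !b.2))) :
    |birk p f (k + 2 * m) (seqOf p (invL p W ++ G ++ W))
        - birk p f m (seqOf p W) - birk p f k (seqOf p G)
        - birk p f m (seqOf p (invL p W))|
      ≤ 2 * C * θ / (1 - θ) := by
  subst hGlen hWlen
  have hGne : G ≠ [] := List.ne_nil_of_length_pos hk
  have hC : 0 ≤ C := lipschitz_const_nonneg hθ0 hf (G.head hGne)
  obtain ⟨hGW, hM⟩ := listRed_append_and_invL_append hG hGne hW hWhead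
  have hlenInv : (invL p W).length = W.length := by simp [invL]
  have hsplit : birk p f (G.length + 2 * W.length) (seqOf p (invL p W ++ G ++ W))
      = birk p f W.length (seqOf p (invL p W ++ (G ++ W))) + birk p f G.length (seqOf p (G ++ W))
        + birk p f W.length (seqOf p W) := by
    rw [List.append_assoc, show G.length + 2 * W.length = (invL p W).length + (G ++ W).length by
      rw [List.length_append, hlenInv]; ring, birk_seqOf_append, List.length_append,
      birk_seqOf_append, hlenInv, add_assoc]
  have hb1 := abs_birk_seqOf_append_sub_le hθ0.le hθ1 hC hf hM
  rw [hlenInv] at hb1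
  have hb2 := abs_birk_seqOf_append_sub_le hθ0.le hθ1 hC hf hGW
  rw [hsplit]
  calc _ = |(birk p f W.length (seqOf p (invL p W ++ (G ++ W)))
            - birk p f W.length (seqOf p (invL p W)))
          + (birk p f G.length (seqOf p (G ++ W)) - birk p f G.length (seqOf p G))| := by ring_nf
    _ ≤ C * θ / (1 - θ) + C * θ / (1 - θ) := (abs_add_le _ _).trans (add_le_add hb1 hb2)
    _ = 2 * C * θ / (1 - θ) := by ring

/-- Key estimate: for `f` Lipschitz (with constant `C`) on the reduced words with
respect to `d_θ`, for `g` cyclically reduced of length `k` and `w` reduced of length `m`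
whose first letter differs from the first letter of `g` and the inverse of the last
letter of `g`, one has
`|f^{k+2m}(w⁻¹gw) − f^m(w) − f^k(g) − f^m(w⁻¹)| ≤ 2Cθ/(1−θ)`. -/
theorem stmt10 (p : ℕ) (hp : 2 ≤ p) (θ : ℝ) (hθ0 : 0 < θ) (hθ1 : θ < 1)
    (C : ℝ) (f : (ℕ → OSymb p) → ℝ)
    (hf : ∀ x y, RedSeq p x → RedSeq p y → |f x - f y| ≤ C * dtheta p θ x y)
    (G W : List (Symb p)) (k m : ℕ)
    (hG : ListRed p G) (hGlen : G.length = k) (hk : 1 ≤ k)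
    (hGcyc : ∀ a ∈ G.head?, ∀ b ∈ G.getLast?, a ≠ (b.1, !b.2))
    (hW : ListRed p W) (hWlen : W.length = m)
    (hWhead : ∀ a ∈ W.head?,
      (∀ b ∈ G.head?, a ≠ b) ∧ (∀ b ∈ G.getLast?, a ≠ (b.1, !b.2))) :
    |birk p f (k + 2 * m) (seqOf p (invL p W ++ G ++ W))
        - birk p f m (seqOf p W) - birk p f k (seqOf p G)
        - birk p f m (seqOf p (invL p W))|
      ≤ 2 * C * θ / (1 - θ) :=
  stmt10_general p θ hθ0 hθ1 C f hf G W k m hG hGlen hk hW hWlen hWhead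
end

section
/- Let Γ be the free group on p ≥ 2 generators acting convex co-compactly on a CAT(-1) space (X,d) with base point o, and suppose the set {d(o,xo) − λ|x| : x ∈ Γ} is bounded, where λ is the average displacement growth rate. Then for every non-identity x ∈ Γ, the stable translation length ℓ(x) = lim_n d(o,x^n o)/n satisfies ℓ(x) = λ‖x‖ where ‖x‖ = lim_n |x^n|/n. In particular the set {ℓ(x) : x ∈ Γ, x ≠ 1} is contained in λℤ. -/
/-!
Write the reduced word of `x` as `c ++ r ++ c⁻¹` with `r` cyclically reduced. The reduced word of
`xⁿ` is then `c ++ rⁿ ++ c⁻¹`, so `|xⁿ| = n|r| + 2|c|`, and the boundedness of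
`d(o, y • o) - λ|y|` along `y = xⁿ` gives `d(o, xⁿ • o) = λ n |r| + O(1)`.
-/

open Filter
open scoped Topology

namespace FreeGroup

open reduceCyclically

variable {α : Type*} [DecidableEq α]

theorem norm_pow_of_ne_zero (x : FreeGroup α) {n : ℕ} (hn : n ≠ 0) :
    norm (x ^ n) = n * (reduceCyclically x.toWord).length + 2 * (conjugator x.toWord).length := by
  simp only [norm, toWord_pow, reduce_flatten_replicate isReduced_toWord, if_neg hn,
    List.length_append, List.length_flatten, List.map_replicate, List.sum_replicate, invRev_length,
    smul_eq_mul]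
  ring

theorem abs_norm_pow_sub_le (x : FreeGroup α) (n : ℕ) :
    |(norm (x ^ n) : ℝ) - n * (reduceCyclically x.toWord).length| ≤
      2 * (conjugator x.toWord).length := by
  rcases eq_or_ne n 0 with rfl | hn
  · simp
  · rw [norm_pow_of_ne_zero x hn]
    push_cast
    rw [add_sub_cancel_left, abs_of_nonneg (by positivity)]

end FreeGroup

theorem tendsto_div_natCast_of_abs_sub_le {f g : ℕ → ℝ} {a B : ℝ} (hfg : ∀ n, |f n - g n| ≤ B)
    (hg : Tendsto (fun n : ℕ => g n / n) atTop (𝓝 a)) :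
    Tendsto (fun n : ℕ => f n / n) atTop (𝓝 a) := by
  have hdiff : Tendsto (fun n : ℕ => (f n - g n) / n) atTop (𝓝 0) := by
    refine squeeze_zero_norm (fun n => ?_) (tendsto_const_div_atTop_nhds_zero_nat B)
    rw [Real.norm_eq_abs, abs_div, Nat.abs_cast]
    exact div_le_div_of_nonneg_right (hfg n) n.cast_nonneg
  simpa [sub_div] using hdiff.add hg

theorem tendsto_natCast_mul_div_natCast (a : ℝ) :
    Tendsto (fun n : ℕ => n * a / n) atTop (𝓝 a) :=
  tendsto_const_nhds.congr' <| (eventually_ne_atTop 0).mono fun n hn => by field_simp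

theorem stmt19_general (p : ℕ) (X : Type*) [MetricSpace X]
    [MulAction (FreeGroup (Fin p)) X] (o : X)
    (lam : ℝ)
    (hbdd : ∃ B : ℝ, ∀ x : FreeGroup (Fin p),
      |dist o (x • o) - lam * FreeGroup.norm x| ≤ B) :
    ∀ x : FreeGroup (Fin p), x ≠ 1 →
      ∃ l nl : ℝ,
        Tendsto (fun n : ℕ => dist o (x ^ n • o) / n) atTop (𝓝 l) ∧
        Tendsto (fun n : ℕ => (FreeGroup.norm (x ^ n) : ℝ) / n) atTop (𝓝 nl) ∧
        l = lam * nl ∧ ∃ z : ℤ, l = lam * z := by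
  intro x _
  obtain ⟨B, hB⟩ := hbdd
  set k := (FreeGroup.reduceCyclically x.toWord).length
  have hnorm : Tendsto (fun n : ℕ => (FreeGroup.norm (x ^ n) : ℝ) / n) atTop (𝓝 k) :=
    tendsto_div_natCast_of_abs_sub_le x.abs_norm_pow_sub_le (tendsto_natCast_mul_div_natCast k)
  have hdist : Tendsto (fun n : ℕ => dist o (x ^ n • o) / n) atTop (𝓝 (lam * k)) :=
    tendsto_div_natCast_of_abs_sub_le (fun n => hB (x ^ n)) <| by
      simpa only [mul_div_assoc] using hnorm.const_mul lam
  exact ⟨lam * k, k, hdist, hnorm, rfl, k, by push_cast; rfl⟩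

/-- Suppose the free group on `p ≥ 2` generators acts (convex co-compactly on a
CAT(-1) space) by isometries on `X` with base point `o`, `λ` is the average
displacement growth rate (limit of the sphere averages of `d(o,xo)/n`), and the set
`{d(o,xo) − λ|x| : x ∈ Γ}` is bounded. Then for every `x ≠ 1`, the stable translation
length `ℓ(x) = lim d(o,xⁿo)/n` and the stable word length `‖x‖ = lim |xⁿ|/n` exist and
satisfy `ℓ(x) = λ‖x‖`; in particular `ℓ(x) ∈ λℤ`. -/
theorem stmt19 (p : ℕ) (hp : 2 ≤ p) (X : Type*) [MetricSpace X]
    [MulAction (FreeGroup (Fin p)) X]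
    (hiso : ∀ g : FreeGroup (Fin p), Isometry (fun x : X => g • x)) (o : X)
    (lam : ℝ)
    (hlam : Tendsto (fun n : ℕ =>
        (∑ᶠ x ∈ {x : FreeGroup (Fin p) | FreeGroup.norm x = n}, dist o (x • o))
          / ((Set.ncard {x : FreeGroup (Fin p) | FreeGroup.norm x = n}) * n))
      atTop (𝓝 lam))
    (hbdd : ∃ B : ℝ, ∀ x : FreeGroup (Fin p),
      |dist o (x • o) - lam * FreeGroup.norm x| ≤ B) :
    ∀ x : FreeGroup (Fin p), x ≠ 1 →
      ∃ l nl : ℝ,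
        Tendsto (fun n : ℕ => dist o (x ^ n • o) / n) atTop (𝓝 l) ∧
        Tendsto (fun n : ℕ => (FreeGroup.norm (x ^ n) : ℝ) / n) atTop (𝓝 nl) ∧
        l = lam * nl ∧ ∃ z : ℤ, l = lam * z :=
  stmt19_general p X o lam hbdd
end
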